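/- arXiv:math/0602004 — 3 statements merged into one kernel-verified Lean document; each statement's English description precedes it below -/
import Mathlib

section
/- Let g ≥ 0, n ≥ 1, r₁ ≥ 1, r₂ ≥ 1 be integers and set r = r₁ + r₂. Assume rn − 2r − 2 > 0 if g = 0, n ≥ 2 if g = 1, and no further assumption if g ≥ 2. Then, as integers, (2r₁²(g−1) + n·r₁(r₁−1) + 2) + (2r₂²(g−1) + n·r₂(r₂−1) + 2) ≤ (2r²(g−1) + n·r(r−1) + 2) − 2. -/
/-- The dimension estimate showing that the reducible locus has codimension at least 2:
for `r = r₁ + r₂`, under the hypotheses `rn − 2r − 2 > 0` if `g = 0` and `n ≥ 2` if `g = 1`,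
`(2r₁²(g−1) + nr₁(r₁−1) + 2) + (2r₂²(g−1) + nr₂(r₂−1) + 2) ≤ (2r²(g−1) + nr(r−1) + 2) − 2`. -/
theorem reducible_locus_codim_two_estimate (g n r1 r2 : ℕ) (hn : 1 ≤ n)
    (hr1 : 1 ≤ r1) (hr2 : 1 ≤ r2)
    (h0 : g = 0 → ((r1 : ℤ) + r2) * n - 2 * ((r1 : ℤ) + r2) - 2 > 0)
    (h1 : g = 1 → 2 ≤ n) :
    (2 * (r1 : ℤ) ^ 2 * ((g : ℤ) - 1) + (n : ℤ) * r1 * ((r1 : ℤ) - 1) + 2) +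
        (2 * (r2 : ℤ) ^ 2 * ((g : ℤ) - 1) + (n : ℤ) * r2 * ((r2 : ℤ) - 1) + 2) ≤
      (2 * ((r1 : ℤ) + r2) ^ 2 * ((g : ℤ) - 1) +
          (n : ℤ) * ((r1 : ℤ) + r2) * (((r1 : ℤ) + r2) - 1) + 2) - 2 := by
  have hr1' : (1 : ℤ) ≤ (r1 : ℤ) := by exact_mod_cast hr1
  have hr2' : (1 : ℤ) ≤ (r2 : ℤ) := by exact_mod_cast hr2
  have hn' : (1 : ℤ) ≤ (n : ℤ) := by exact_mod_cast hn
  have key : (2 : ℤ) ≤ (r1 : ℤ) * r2 * ((n : ℤ) + 2 * g - 2) := by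
    match g, h0, h1 with
    | 0, h0, _ =>
      have h := h0 rfl
      have hn3 : (3 : ℤ) ≤ (n : ℤ) := by nlinarith
      push_cast
      nlinarith [mul_nonneg (mul_nonneg (by linarith : (0:ℤ) ≤ (r1:ℤ) - 1)
        (by linarith : (0:ℤ) ≤ (r2:ℤ) - 1)) (by linarith : (0:ℤ) ≤ (n:ℤ) - 2)]
    | 1, _, h1 =>
      have h := h1 rfl
      have hn2 : (2 : ℤ) ≤ (n : ℤ) := by exact_mod_cast h
      have hprod : (1 : ℤ) ≤ (r1 : ℤ) * r2 := by nlinarith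
      push_cast
      calc (2 : ℤ) = 1 * 2 := by ring
        _ ≤ (r1 : ℤ) * r2 * ((n : ℤ) + 2 * 1 - 2) := by
            apply mul_le_mul hprod (by linarith) (by norm_num) (by linarith)
    | (k + 2), _, _ =>
      have hprod : (1 : ℤ) ≤ (r1 : ℤ) * r2 := by nlinarith
      push_cast
      calc (2 : ℤ) = 1 * 2 := by ring
        _ ≤ (r1 : ℤ) * r2 * ((n : ℤ) + 2 * ((k : ℤ) + 2) - 2) := by
            apply mul_le_mul hprod (by have := Int.natCast_nonneg k; linarith) (by norm_num) (by linarith)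
  nlinarith [key]
end

section
/- Let g ≥ 2 and s ≥ 2 be integers, let m₁,…,m_s be positive integers, and for each k ∈ {1,…,s} let r_k⁽¹⁾,…,r_k⁽ᵐᵏ⁾ be positive integers; set R = ∑_{k=1}^{s} ∑_{i=1}^{m_k} r_k⁽ⁱ⁾. Then, as integers, −g + ∑_{k=1}^{s}∑_{i=1}^{m_k} ((r_k⁽ⁱ⁾)²(g−1) + 1) + ∑_{k=1}^{s} (1 − m_k + ∑_{1≤i<j≤m_k} (r_k⁽ⁱ⁾ r_k⁽ʲ⁾ (g−1) + 1)) + 1 − s + ∑_{1≤k<k'≤s} ∑_{1≤i≤m_k, 1≤j≤m_{k'}} (r_k⁽ⁱ⁾ r_{k'}⁽ʲ⁾ (g−1) + r_k⁽ⁱ⁾ r_{k'}⁽ʲ⁾ − 1) < (R² − 1)(g−1). -/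
open Finset in
private lemma hnde_split (n : ℕ) (i : Fin n) (h : Fin n → ℤ) :
    ∑ j, h j = ∑ j ∈ univ.filter (fun j => j < i), h j + h i
      + ∑ j ∈ univ.filter (fun j => i < j), h j := by
  have h1 : (univ : Finset (Fin n)) =
      univ.filter (fun j => j < i) ∪ insert i (univ.filter (fun j => i < j)) := by
    ext j; simp; omega
  conv_lhs => rw [h1]
  rw [Finset.sum_union, Finset.sum_insert]
  · ring
  · simp
  · rw [Finset.disjoint_left]; intro j hj hj'; simp at hj hj'
    rcases hj' with h' | h' <;> omega

open Finset in
private lemma hnde_sq_sum (n : ℕ) (f : Fin n → ℤ) :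
    (∑ i, f i)^2 = ∑ i, (f i)^2
      + 2 * ∑ i, ∑ j ∈ univ.filter (fun j => i < j), f i * f j := by
  have h0 : (∑ i, f i)^2 = ∑ i, ∑ j, f i * f j := by
    rw [sq, Fintype.sum_mul_sum]
  have h1 : ∀ i : Fin n, ∑ j, f i * f j
      = ∑ j ∈ univ.filter (fun j => j < i), f i * f j + f i * f i
        + ∑ j ∈ univ.filter (fun j => i < j), f i * f j :=
    fun i => hnde_split n i _
  have hsw : ∑ i, ∑ j ∈ univ.filter (fun j => j < i), f i * f j
      = ∑ i, ∑ j ∈ univ.filter (fun j => i < j), f i * f j := by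
    rw [Finset.sum_comm' (t' := univ) (s' := fun j => univ.filter (fun i => j < i))
      (by simp [and_comm])]
    exact Finset.sum_congr rfl fun i _ => Finset.sum_congr rfl fun j _ => mul_comm _ _
  calc (∑ i, f i)^2 = ∑ i, (∑ j ∈ univ.filter (fun j => j < i), f i * f j + f i * f i
        + ∑ j ∈ univ.filter (fun j => i < j), f i * f j) := by
        rw [h0]; exact Finset.sum_congr rfl fun i _ => h1 i
    _ = _ := by
        rw [Finset.sum_add_distrib, Finset.sum_add_distrib, hsw]
        simp [sq]; ring

/-- The key dimension estimate (genus `g ≥ 2`) in the proof of irreducibility of the moduli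
space of α-stable parabolic connections: the parameter space of iterated extensions built
from a Harder–Narasimhan filtration with `s ≥ 2` steps, whose `k`-th graded piece has a
Jordan–Hölder filtration with `m_k` stable pieces of ranks `r_k⁽ⁱ⁾`, has dimension strictly
less than `(R² − 1)(g − 1)` where `R = ∑_k ∑_i r_k⁽ⁱ⁾`. -/
theorem harder_narasimhan_dimension_estimate (g s : ℕ) (hg : 2 ≤ g) (hs : 2 ≤ s)
    (m : Fin s → ℕ) (hm : ∀ k, 1 ≤ m k)
    (r : (k : Fin s) → Fin (m k) → ℕ) (hr : ∀ k i, 1 ≤ r k i) :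
    -(g : ℤ) + (∑ k : Fin s, ∑ i : Fin (m k), ((r k i : ℤ) ^ 2 * ((g : ℤ) - 1) + 1)) +
        (∑ k : Fin s, (1 - (m k : ℤ) +
          ∑ i : Fin (m k), ∑ j ∈ Finset.univ.filter (fun j : Fin (m k) => i < j),
            ((r k i : ℤ) * (r k j : ℤ) * ((g : ℤ) - 1) + 1))) +
        (1 - (s : ℤ)) +
        (∑ k : Fin s, ∑ k' ∈ Finset.univ.filter (fun k' : Fin s => k < k'),
          ∑ i : Fin (m k), ∑ j : Fin (m k'),
            ((r k i : ℤ) * (r k' j : ℤ) * ((g : ℤ) - 1) +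
              (r k i : ℤ) * (r k' j : ℤ) - 1)) <
      ((∑ k : Fin s, ∑ i : Fin (m k), (r k i : ℤ)) ^ 2 - 1) * ((g : ℤ) - 1) := by
  classical
  have hg' : (2:ℤ) ≤ (g:ℤ) := by exact_mod_cast hg
  set G : ℤ := (g : ℤ) - 1 with hGdef
  have hG : 1 ≤ G := by omega
  -- basic cast facts
  have hrc : ∀ k i, (1:ℤ) ≤ (r k i : ℤ) := fun k i => by exact_mod_cast hr k i
  have hmc : ∀ k, (1:ℤ) ≤ (m k : ℤ) := fun k => by exact_mod_cast hm k
  have hma : ∀ k : Fin s, (m k : ℤ) ≤ ∑ i : Fin (m k), (r k i : ℤ) := by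
    intro k
    calc (m k : ℤ) = ∑ _i : Fin (m k), (1:ℤ) := by simp
      _ ≤ _ := Finset.sum_le_sum fun i _ => hrc k i
  have ha0 : ∀ k : Fin s, (0:ℤ) ≤ ∑ i : Fin (m k), (r k i : ℤ) := by
    intro k; exact le_trans (by positivity) (hma k)
  -- named quantities
  set A : ℤ := ∑ k : Fin s, ∑ i : Fin (m k), (r k i : ℤ)^2 with hA
  set B : ℤ := ∑ k : Fin s, ∑ i : Fin (m k),
      ∑ j ∈ Finset.univ.filter (fun j : Fin (m k) => i < j), (r k i : ℤ) * (r k j : ℤ) with hB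
  set C : ℤ := ∑ k : Fin s, ∑ i : Fin (m k),
      ∑ _j ∈ Finset.univ.filter (fun j : Fin (m k) => i < j), (1:ℤ) with hC
  set Q : ℤ := ∑ k : Fin s, ∑ k' ∈ Finset.univ.filter (fun k' : Fin s => k < k'),
      (∑ i : Fin (m k), (r k i : ℤ)) * (∑ j : Fin (m k'), (r k' j : ℤ)) with hQ
  set M : ℤ := ∑ k : Fin s, ∑ k' ∈ Finset.univ.filter (fun k' : Fin s => k < k'),
      (m k : ℤ) * (m k' : ℤ) with hM
  -- identity for the first big sum
  have h2 : ∑ k : Fin s, ∑ i : Fin (m k), ((r k i : ℤ) ^ 2 * G + 1)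
      = A * G + ∑ k : Fin s, (m k : ℤ) := by
    rw [hA, Finset.sum_mul, ← Finset.sum_add_distrib]
    refine Finset.sum_congr rfl fun k _ => ?_
    rw [Finset.sum_add_distrib, ← Finset.sum_mul]
    simp
  -- identity for the second big sum
  have h3 : ∑ k : Fin s, (1 - (m k : ℤ) +
        ∑ i : Fin (m k), ∑ j ∈ Finset.univ.filter (fun j : Fin (m k) => i < j),
          ((r k i : ℤ) * (r k j : ℤ) * G + 1))
      = (s : ℤ) - (∑ k : Fin s, (m k : ℤ)) + B * G + C := by
    have hin : ∀ k : Fin s,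
        ∑ i : Fin (m k), ∑ j ∈ Finset.univ.filter (fun j : Fin (m k) => i < j),
          ((r k i : ℤ) * (r k j : ℤ) * G + 1)
        = (∑ i : Fin (m k), ∑ j ∈ Finset.univ.filter (fun j : Fin (m k) => i < j),
            (r k i : ℤ) * (r k j : ℤ)) * G
          + ∑ i : Fin (m k), ∑ _j ∈ Finset.univ.filter (fun j : Fin (m k) => i < j), (1:ℤ) := by
      intro k
      rw [Finset.sum_mul, ← Finset.sum_add_distrib]
      refine Finset.sum_congr rfl fun i _ => ?_
      rw [Finset.sum_add_distrib, ← Finset.sum_mul]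
    calc ∑ k : Fin s, (1 - (m k : ℤ) +
          ∑ i : Fin (m k), ∑ j ∈ Finset.univ.filter (fun j : Fin (m k) => i < j),
            ((r k i : ℤ) * (r k j : ℤ) * G + 1))
        = ∑ k : Fin s, (1 - (m k : ℤ)
            + ((∑ i : Fin (m k), ∑ j ∈ Finset.univ.filter (fun j : Fin (m k) => i < j),
                (r k i : ℤ) * (r k j : ℤ)) * G
              + ∑ i : Fin (m k), ∑ _j ∈ Finset.univ.filter (fun j : Fin (m k) => i < j), (1:ℤ))) :=
          Finset.sum_congr rfl fun k _ => by rw [hin k]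
      _ = _ := by
          rw [hB, hC, Finset.sum_add_distrib, Finset.sum_sub_distrib, Finset.sum_add_distrib,
            ← Finset.sum_mul]
          simp
          ring
  -- identity for the cross-term sum
  have h5 : ∑ k : Fin s, ∑ k' ∈ Finset.univ.filter (fun k' : Fin s => k < k'),
        ∑ i : Fin (m k), ∑ j : Fin (m k'),
          ((r k i : ℤ) * (r k' j : ℤ) * G + (r k i : ℤ) * (r k' j : ℤ) - 1)
      = Q * G + Q - M := by
    have hin : ∀ k k' : Fin s, ∑ i : Fin (m k), ∑ j : Fin (m k'),
          ((r k i : ℤ) * (r k' j : ℤ) * G + (r k i : ℤ) * (r k' j : ℤ) - 1)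
        = ((∑ i : Fin (m k), (r k i : ℤ)) * (∑ j : Fin (m k'), (r k' j : ℤ))) * G
          + (∑ i : Fin (m k), (r k i : ℤ)) * (∑ j : Fin (m k'), (r k' j : ℤ))
          - (m k : ℤ) * (m k' : ℤ) := by
      intro k k'
      have hsum : (∑ i : Fin (m k), (r k i : ℤ)) * (∑ j : Fin (m k'), (r k' j : ℤ))
          = ∑ i : Fin (m k), ∑ j : Fin (m k'), (r k i : ℤ) * (r k' j : ℤ) :=
        Fintype.sum_mul_sum _ _
      have hterm : ∀ (i : Fin (m k)) (j : Fin (m k')),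
          (r k i : ℤ) * (r k' j : ℤ) * G + (r k i : ℤ) * (r k' j : ℤ) - 1
            = (r k i : ℤ) * (r k' j : ℤ) * (G + 1) - 1 := fun i j => by ring
      calc ∑ i : Fin (m k), ∑ j : Fin (m k'),
            ((r k i : ℤ) * (r k' j : ℤ) * G + (r k i : ℤ) * (r k' j : ℤ) - 1)
          = ∑ i : Fin (m k), ((∑ j : Fin (m k'), (r k i : ℤ) * (r k' j : ℤ)) * (G + 1)
              - (m k' : ℤ)) := by
            refine Finset.sum_congr rfl fun i _ => ?_
            simp only [hterm, Finset.sum_sub_distrib, ← Finset.sum_mul]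
            simp
        _ = (∑ i : Fin (m k), ∑ j : Fin (m k'), (r k i : ℤ) * (r k' j : ℤ)) * (G + 1)
              - (m k : ℤ) * (m k' : ℤ) := by
            rw [Finset.sum_sub_distrib, ← Finset.sum_mul]
            simp [mul_comm]
        _ = _ := by rw [← hsum]; ring
    calc ∑ k : Fin s, ∑ k' ∈ Finset.univ.filter (fun k' : Fin s => k < k'),
          ∑ i : Fin (m k), ∑ j : Fin (m k'),
            ((r k i : ℤ) * (r k' j : ℤ) * G + (r k i : ℤ) * (r k' j : ℤ) - 1)
        = ∑ k : Fin s, ∑ k' ∈ Finset.univ.filter (fun k' : Fin s => k < k'),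
            (((∑ i : Fin (m k), (r k i : ℤ)) * (∑ j : Fin (m k'), (r k' j : ℤ))) * G
              + (∑ i : Fin (m k), (r k i : ℤ)) * (∑ j : Fin (m k'), (r k' j : ℤ))
              - (m k : ℤ) * (m k' : ℤ)) :=
          Finset.sum_congr rfl fun k _ => Finset.sum_congr rfl fun k' _ => hin k k'
      _ = _ := by
          rw [hQ, hM]
          simp only [Finset.sum_sub_distrib, Finset.sum_add_distrib, ← Finset.sum_mul]
  -- square of the total rank
  have hRR : (∑ k : Fin s, ∑ i : Fin (m k), (r k i : ℤ)) ^ 2 = A + 2 * B + 2 * Q := by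
    rw [hnde_sq_sum s (fun k => ∑ i : Fin (m k), (r k i : ℤ))]
    have hk : ∀ k : Fin s, (∑ i : Fin (m k), (r k i : ℤ))^2
        = (∑ i : Fin (m k), (r k i : ℤ)^2)
          + 2 * ∑ i : Fin (m k), ∑ j ∈ Finset.univ.filter (fun j : Fin (m k) => i < j),
              (r k i : ℤ) * (r k j : ℤ) := fun k => hnde_sq_sum (m k) _
    rw [Finset.sum_congr rfl fun k _ => hk k, Finset.sum_add_distrib, ← Finset.mul_sum,
      hA, hB, hQ]
  -- inequalities
  have hCB : C ≤ B := by
    rw [hB, hC]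
    refine Finset.sum_le_sum fun k _ => Finset.sum_le_sum fun i _ =>
      Finset.sum_le_sum fun j _ => ?_
    have h1 := hrc k i; have h2 := hrc k j
    nlinarith
  have hB0 : 0 ≤ B := by
    rw [hB]; positivity
  have hQ0 : 0 ≤ Q := by
    rw [hQ]
    refine Finset.sum_nonneg fun k _ => Finset.sum_nonneg fun k' _ =>
      mul_nonneg (ha0 k) (ha0 k')
  have hMQ : M ≤ Q := by
    rw [hQ, hM]
    refine Finset.sum_le_sum fun k _ => Finset.sum_le_sum fun k' _ => ?_
    exact mul_le_mul (hma k) (hma k') (by positivity) (ha0 k)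
  have hM1 : 1 ≤ M := by
    rw [hM]
    have h0s : 0 < s := by omega
    have h1s : 1 < s := by omega
    have hk01 : (⟨0, h0s⟩ : Fin s) < ⟨1, h1s⟩ := by simp [Fin.lt_def]
    have hmem : (⟨1, h1s⟩ : Fin s)
        ∈ Finset.univ.filter (fun k' : Fin s => (⟨0, h0s⟩ : Fin s) < k') := by
      simp [hk01]
    have hnn : ∀ k k' : Fin s, (0:ℤ) ≤ (m k : ℤ) * (m k' : ℤ) := fun k k' => by positivity
    have hstep0 : (1:ℤ) ≤ (m (⟨0, h0s⟩ : Fin s) : ℤ) * (m (⟨1, h1s⟩ : Fin s) : ℤ) := by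
      nlinarith [hmc (⟨0, h0s⟩ : Fin s), hmc (⟨1, h1s⟩ : Fin s)]
    have hstep1 : (1:ℤ) ≤ ∑ k' ∈ Finset.univ.filter (fun k' : Fin s => (⟨0, h0s⟩ : Fin s) < k'),
        (m (⟨0, h0s⟩ : Fin s) : ℤ) * (m k' : ℤ) :=
      le_trans hstep0 (Finset.single_le_sum (fun k' _ => hnn _ k') hmem)
    exact le_trans hstep1 (Finset.single_le_sum
      (f := fun k => ∑ k' ∈ Finset.univ.filter (fun k' : Fin s => k < k'),
        (m k : ℤ) * (m k' : ℤ))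
      (fun k _ => Finset.sum_nonneg fun k' _ => hnn k k') (Finset.mem_univ _))
  -- conclude
  rw [h2, h3, h5, hRR]
  have e1 : B * G = (G - 1) * B + B := by ring
  have e2 : Q * G = (G - 1) * Q + Q := by ring
  have e3 : (A + 2 * B + 2 * Q - 1) * G = A * G + 2 * (B * G) + 2 * (Q * G) - G := by ring
  have e4 : 0 ≤ (G - 1) * B := mul_nonneg (by linarith) hB0
  have e5 : 0 ≤ (G - 1) * Q := mul_nonneg (by linarith) hQ0
  linarith [e1, e2, e3, e4, e5, hCB, hM1, hMQ]
end

section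
/- Let A be a commutative ring and let u, v, w : A → A be derivations, extended entrywise to square matrices over A. Let P, Q be invertible m×m matrices over A and set R = (PQ)⁻¹. Then Tr(u(P)·v(Q)·w(R) + v(P)·w(Q)·u(R) + w(P)·u(Q)·v(R)) = Tr(−u(P)·v(P⁻¹)·w(P)·P⁻¹ + u(PQ)·v((PQ)⁻¹)·w(PQ)·(PQ)⁻¹ − u(Q)·v(Q⁻¹)·w(Q)·Q⁻¹). -/
section AuxTraceCocycle

variable {A : Type*} [CommRing A] {m : ℕ}

private lemma dmap_mul' (u : A → A) (hu_add : ∀ a b, u (a + b) = u a + u b)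
    (hu_mul : ∀ a b, u (a * b) = u a * b + a * u b)
    (M N : Matrix (Fin m) (Fin m) A) :
    (M * N).map u = M.map u * N + M * N.map u := by
  ext i j
  simp only [Matrix.map_apply, Matrix.mul_apply, Matrix.add_apply]
  have hs : u (∑ k : Fin m, M i k * N k j) = ∑ k : Fin m, u (M i k * N k j) :=
    map_sum (AddMonoidHom.mk' u hu_add) _ _
  rw [hs]
  simp only [hu_mul]
  rw [Finset.sum_add_distrib]

private lemma dmap_one' (u : A → A) (hu_add : ∀ a b, u (a + b) = u a + u b)
    (hu_mul : ∀ a b, u (a * b) = u a * b + a * u b) :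
    (1 : Matrix (Fin m) (Fin m) A).map u = 0 := by
  have h0 : u 0 = 0 := by
    have := hu_add 0 0; simpa using this.symm
  have h1 : u 1 = 0 := by
    have := hu_mul 1 1; simp at this; exact this
  ext i j
  by_cases h : i = j <;> simp [Matrix.map, Matrix.one_apply, h, h0, h1]

private lemma dmap_inv' (u : A → A) (hu_add : ∀ a b, u (a + b) = u a + u b)
    (hu_mul : ∀ a b, u (a * b) = u a * b + a * u b)
    (M : Matrix (Fin m) (Fin m) A) (hM : IsUnit M) :
    (M⁻¹).map u = -(M⁻¹ * M.map u * M⁻¹) := by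
  have hMd : IsUnit M.det := (Matrix.isUnit_iff_isUnit_det M).mp hM
  have h1 : M * M⁻¹ = 1 := Matrix.mul_nonsing_inv M hMd
  have h2 : M⁻¹ * M = 1 := Matrix.nonsing_inv_mul M hMd
  have hthis := congrArg (Matrix.map · u) h1
  rw [dmap_mul' u hu_add hu_mul, dmap_one' u hu_add hu_mul] at hthis
  have h3 : M * (M⁻¹).map u = -(M.map u * M⁻¹) := by
    rw [eq_neg_iff_add_eq_zero, add_comm]; exact hthis
  calc (M⁻¹).map u = (M⁻¹ * M) * (M⁻¹).map u := by rw [h2, one_mul]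
    _ = M⁻¹ * (M * (M⁻¹).map u) := by rw [mul_assoc]
    _ = -(M⁻¹ * M.map u * M⁻¹) := by rw [h3]; noncomm_ring

private lemma trace_cocycle_key (a b c x y z P Q P' Q' : Matrix (Fin m) (Fin m) A)
    (hPP' : P * P' = 1) (hP'P : P' * P = 1) (hQQ' : Q * Q' = 1) (hQ'Q : Q' * Q = 1) :
    (a * y * (-(Q' * z * Q') * P' + Q' * -(P' * c * P')) +
        b * z * (-(Q' * x * Q') * P' + Q' * -(P' * a * P')) +
      c * x * (-(Q' * y * Q') * P' + Q' * -(P' * b * P'))).trace =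
    (-(a * -(P' * b * P') * c * P') +
        (a * Q + P * x) * (-(Q' * y * Q') * P' + Q' * -(P' * b * P')) * (c * Q + P * z) *
          (Q' * P') -
      x * -(Q' * y * Q') * z * Q').trace := by
  have cP : ∀ X : Matrix (Fin m) (Fin m) A, P' * (P * X) = X := fun X => by
    rw [← Matrix.mul_assoc, hP'P, Matrix.one_mul]
  have cP2 : ∀ X : Matrix (Fin m) (Fin m) A, P * (P' * X) = X := fun X => by
    rw [← Matrix.mul_assoc, hPP', Matrix.one_mul]
  have cQ : ∀ X : Matrix (Fin m) (Fin m) A, Q' * (Q * X) = X := fun X => by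
    rw [← Matrix.mul_assoc, hQ'Q, Matrix.one_mul]
  have cQ2 : ∀ X : Matrix (Fin m) (Fin m) A, Q * (Q' * X) = X := fun X => by
    rw [← Matrix.mul_assoc, hQQ', Matrix.one_mul]
  simp only [Matrix.mul_add, Matrix.add_mul, Matrix.mul_neg, Matrix.neg_mul,
    Matrix.trace_add, Matrix.trace_sub, Matrix.trace_neg, neg_neg, Matrix.mul_assoc,
    cP, cP2, cQ, cQ2, hPP', hP'P, hQQ', hQ'Q, Matrix.mul_one]
  have tc : ∀ M N : Matrix (Fin m) (Fin m) A, (M * N).trace = (N * M).trace :=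
    fun M N => Matrix.trace_mul_comm M N
  have e1 : (P * (x * (Q' * (y * (Q' * (P' * (c * P'))))))).trace
      = (c * (x * (Q' * (y * (Q' * P'))))).trace := by
    rw [tc P, tc c]
    simp only [Matrix.mul_assoc, cP, cP2, cQ, cQ2, hPP', hP'P, hQQ', hQ'Q, Matrix.mul_one]
  have e2 : (P * (x * (Q' * (P' * (b * (P' * (c * P'))))))).trace
      = (c * (x * (Q' * (P' * (b * P'))))).trace := by
    rw [tc P, tc c]
    simp only [Matrix.mul_assoc, cP, cP2, cQ, cQ2, hPP', hP'P, hQQ', hQ'Q, Matrix.mul_one]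
  have e3 : (P * (x * (Q' * (y * (Q' * (z * (Q' * P'))))))).trace
      = (x * (Q' * (y * (Q' * (z * Q'))))).trace := by
    rw [tc P]
    simp only [Matrix.mul_assoc, cP, cP2, cQ, cQ2, hPP', hP'P, hQQ', hQ'Q, Matrix.mul_one]
  have e4 : (P * (x * (Q' * (P' * (b * (z * (Q' * P'))))))).trace
      = (b * (z * (Q' * (x * (Q' * P'))))).trace := by
    calc (P * (x * (Q' * (P' * (b * (z * (Q' * P'))))))).trace
        = ((x * (Q' * P')) * (b * (z * Q'))).trace := by
          rw [tc P]
          simp only [Matrix.mul_assoc, cP, cP2, cQ, cQ2, hPP', hP'P, hQQ', hQ'Q,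
            Matrix.mul_one]
      _ = ((b * (z * Q')) * (x * (Q' * P'))).trace := tc _ _
      _ = (b * (z * (Q' * (x * (Q' * P'))))).trace := by simp only [Matrix.mul_assoc]
  have e5 : (a * (P' * (b * (z * (Q' * P'))))).trace
      = (b * (z * (Q' * (P' * (a * P'))))).trace := by
    calc (a * (P' * (b * (z * (Q' * P'))))).trace
        = ((a * P') * (b * (z * (Q' * P')))).trace := by simp only [Matrix.mul_assoc]
      _ = ((b * (z * (Q' * P'))) * (a * P')).trace := tc _ _
      _ = (b * (z * (Q' * (P' * (a * P'))))).trace := by simp only [Matrix.mul_assoc]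
  rw [e1, e2, e3, e4, e5]
  ring

end AuxTraceCocycle

/-- Trace identity used in the proof that the symplectic form is closed: for derivations
`u, v, w` on a commutative ring `A`, extended entrywise to matrices, invertible `m×m`
matrices `P, Q` and `R = (PQ)⁻¹`,
`Tr(u(P)v(Q)w(R) + v(P)w(Q)u(R) + w(P)u(Q)v(R))
  = Tr(−u(P)v(P⁻¹)w(P)P⁻¹ + u(PQ)v((PQ)⁻¹)w(PQ)(PQ)⁻¹ − u(Q)v(Q⁻¹)w(Q)Q⁻¹)`. -/
theorem trace_cocycle_identity (A : Type*) [CommRing A]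
    (u v w : A → A)
    (hu_add : ∀ a b, u (a + b) = u a + u b)
    (hu_mul : ∀ a b, u (a * b) = u a * b + a * u b)
    (hv_add : ∀ a b, v (a + b) = v a + v b)
    (hv_mul : ∀ a b, v (a * b) = v a * b + a * v b)
    (hw_add : ∀ a b, w (a + b) = w a + w b)
    (hw_mul : ∀ a b, w (a * b) = w a * b + a * w b)
    (m : ℕ) (P Q R : Matrix (Fin m) (Fin m) A)
    (hP : IsUnit P) (hQ : IsUnit Q) (hR : R = (P * Q)⁻¹) :
    Matrix.trace ((P.map u) * (Q.map v) * (R.map w) +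
        (P.map v) * (Q.map w) * (R.map u) +
        (P.map w) * (Q.map u) * (R.map v)) =
      Matrix.trace (-((P.map u) * ((P⁻¹).map v) * (P.map w) * P⁻¹) +
        ((P * Q).map u) * (((P * Q)⁻¹).map v) * ((P * Q).map w) * (P * Q)⁻¹ -
        (Q.map u) * ((Q⁻¹).map v) * (Q.map w) * Q⁻¹) := by
  have hPd : IsUnit P.det := (Matrix.isUnit_iff_isUnit_det P).mp hP
  have hQd : IsUnit Q.det := (Matrix.isUnit_iff_isUnit_det Q).mp hQ
  subst hR
  simp only [Matrix.mul_inv_rev]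
  rw [dmap_mul' u hu_add hu_mul P Q, dmap_mul' w hw_add hw_mul P Q,
      dmap_mul' v hv_add hv_mul Q⁻¹ P⁻¹, dmap_mul' w hw_add hw_mul Q⁻¹ P⁻¹,
      dmap_mul' u hu_add hu_mul Q⁻¹ P⁻¹,
      dmap_inv' u hu_add hu_mul P hP, dmap_inv' v hv_add hv_mul P hP,
      dmap_inv' w hw_add hw_mul P hP,
      dmap_inv' u hu_add hu_mul Q hQ, dmap_inv' v hv_add hv_mul Q hQ,
      dmap_inv' w hw_add hw_mul Q hQ]
  exact trace_cocycle_key (P.map u) (P.map v) (P.map w) (Q.map u) (Q.map v) (Q.map w)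
    P Q P⁻¹ Q⁻¹ (Matrix.mul_nonsing_inv P hPd) (Matrix.nonsing_inv_mul P hPd)
    (Matrix.mul_nonsing_inv Q hQd) (Matrix.nonsing_inv_mul Q hQd)
end
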